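/- arXiv:2006.10999 — 2 statements merged into one kernel-verified Lean document; each statement's English description precedes it below -/
import Mathlib

section
/- The block-matrix representation A ↦ (π_i ∘ A|_{V_j})_{i,j∈ℤ} from the ring of continuous additive endomorphisms of F_p((t))^d onto the ring M_{d,ℤ}(F_p) of matrices satisfying (M1)–(M3) is surjective, hence a ring isomorphism. -/
/-- Conditions (M1)–(M3) on a `ℤ×ℤ`-indexed block matrix with `d×d` blocks over `F_p`. -/
def IsMmat (p d : ℕ) (A : ℤ → ℤ → Matrix (Fin d) (Fin d) (ZMod p)) : Prop :=
  (∀ i : ℤ, ∃ J : ℤ, ∀ j : ℤ, J < j → A i j = 0) ∧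
  (∀ j : ℤ, ∃ I : ℤ, ∀ i : ℤ, i < I → A i j = 0) ∧
  (∃ I J : ℤ, ∀ i j : ℤ, i < I → J < j → A i j = 0)

/-- The block matrix `(A_{i,j})` of an additive endomorphism of `F_p((t))^d`. -/
noncomputable def blockMat (p d : ℕ)
    (A : AddMonoid.End (Fin d → LaurentSeries (ZMod p))) :
    ℤ → ℤ → Matrix (Fin d) (Fin d) (ZMod p) :=
  fun i j => Matrix.of fun r s =>
    ((A fun r' => HahnSeries.single j (if r' = s then (1 : ZMod p) else 0)) r).coeff i

/-!
The preimage of `M` is its action on coefficient vectors: for `f = ∑ⱼ vⱼ tʲ`,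
the `i`-th coefficient vector of `A f` is `∑ⱼ M i j *ᵥ vⱼ`. Condition (M1) makes this sum finite.
Conditions (M2) and (M3) together say that, for each `N`, all blocks in columns `≥ N` vanish
in rows far enough down; since the coefficients of `f` vanish below some `N`, this bounds the
coefficients of `A f` from below, so `A f` is again a Laurent series. Dually, (M1) and (M3) say
that for each `D` all blocks in rows `< D` vanish in columns far enough to the right, which is
continuity at `0` for the `t`-adic topology.
-/

open Filter Topology Matrix

section CornerVanishing

variable {α : Type*} [Zero α] {M : ℤ → ℤ → α}

theorem eventually_atBot_forall_ge_eq_zero (hcol : ∀ j, ∀ᶠ i in atBot, M i j = 0)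
    (hcorner : ∃ I J, ∀ i j, i < I → J < j → M i j = 0) (N : ℤ) :
    ∀ᶠ i in atBot, ∀ j, N ≤ j → M i j = 0 := by
  obtain ⟨I, J, hIJ⟩ := hcorner
  have hmid : ∀ᶠ i in atBot, ∀ j ∈ Set.Icc N J, M i j = 0 :=
    (Set.finite_Icc N J).eventually_all.2 fun j _ => hcol j
  filter_upwards [hmid, eventually_lt_atBot I] with i hmid hiI j hNj
  rcases le_or_gt j J with hjJ | hJj
  · exact hmid j ⟨hNj, hjJ⟩
  · exact hIJ i j hiI hJj

theorem eventually_atTop_forall_lt_eq_zero (hrow : ∀ i, ∀ᶠ j in atTop, M i j = 0)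
    (hcorner : ∃ I J, ∀ i j, i < I → J < j → M i j = 0) (D : ℤ) :
    ∀ᶠ j in atTop, ∀ i, i < D → M i j = 0 := by
  obtain ⟨I, J, hIJ⟩ := hcorner
  have hmid : ∀ᶠ j in atTop, ∀ i ∈ Set.Ico I D, M i j = 0 :=
    (Set.finite_Ico I D).eventually_all.2 fun i _ => hrow i
  filter_upwards [hmid, eventually_gt_atTop J] with j hmid hJj i hiD
  rcases lt_or_ge i I with hiI | hIi
  · exact hIJ i j hiI hJj
  · exact hmid i ⟨hIi, hiD⟩

end CornerVanishing

namespace LaurentSeries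

open WithZero MonoidWithZeroHom.ValueGroup₀ WithZeroTopology in
theorem hasBasis_nhds_zero (K : Type*) [Field K] :
    (𝓝 (0 : LaurentSeries K)).HasBasis (fun _ : ℤ => True)
      fun D => {f | ∀ n, n < D → f.coeff n = 0} := by
  refine ⟨fun s => ⟨fun hs => ?_, fun ⟨D, _, hD⟩ => ?_⟩⟩
  · obtain ⟨γ, hγ⟩ := Valued.mem_nhds_zero.1 hs
    have hexp : exp (-(1 - log (embedding γ.1))) < embedding γ.1 := by
      rw [← lt_log_iff_exp_lt (by simp)]
      omega
    refine ⟨1 - log (embedding γ.1), trivial, fun f hf => hγ ?_⟩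
    rw [Set.mem_ofPred_eq, Valuation.restrict_lt_iff_lt_embedding]
    exact ((valuation_le_iff_coeff_lt_eq_zero K).2 hf).trans_lt hexp
  · have hv := (Valued.continuous_valuation_of_surjective (valuation_surjective K)).tendsto 0
    rw [map_zero, WithZeroTopology.tendsto_zero] at hv
    filter_upwards [hv (exp (-D)) (exp_ne_zero)] with f hf
    exact hD ((valuation_le_iff_coeff_lt_eq_zero K).1 hf.le)

section BlockAction

variable {R ι : Type*} [Semiring R] [Fintype ι] {M : ℤ → ℤ → Matrix ι ι R}

theorem eventually_atBot_forall_coeff_eq_zero (f : ι → LaurentSeries R) :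
    ∀ᶠ j in atBot, ∀ s, (f s).coeff j = 0 :=
  eventually_all.2 fun s =>
    (eventually_lt_atBot (f s).order).mono fun _ => HahnSeries.coeff_eq_zero_of_lt_order

variable (M) in
noncomputable def blockCoeff (f : ι → LaurentSeries R) (i : ℤ) : ι → R :=
  ∑ᶠ j, M i j *ᵥ fun s => (f s).coeff j

theorem blockCoeff_eq_zero {f : ι → LaurentSeries R} {i N : ℤ}
    (hf : ∀ s, ∀ j, j < N → (f s).coeff j = 0) (hM : ∀ j, N ≤ j → M i j = 0) :
    blockCoeff M f i = 0 := by
  refine finsum_eq_zero_of_forall_eq_zero fun j => ?_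
  rcases lt_or_ge j N with hjN | hNj
  · simp [funext (hf · j hjN), ← Pi.zero_def]
  · simp [hM j hNj]

theorem blockCoeff_zero (i : ℤ) : blockCoeff M 0 i = 0 := by
  refine finsum_eq_zero_of_forall_eq_zero fun j => ?_
  simp [← Pi.zero_def]

theorem finite_support_mulVec_coeff (hrow : ∀ i, ∀ᶠ j in atTop, M i j = 0)
    (f : ι → LaurentSeries R) (i : ℤ) :
    (Function.support fun j => M i j *ᵥ fun s => (f s).coeff j).Finite := by
  refine eventually_cofinite.1 ?_
  rw [Int.cofinite_eq, eventually_sup]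
  exact ⟨(eventually_atBot_forall_coeff_eq_zero f).mono fun j hj => by
      simp [funext hj, ← Pi.zero_def],
    (hrow i).mono fun j hj => by simp [hj]⟩

theorem blockCoeff_add (hrow : ∀ i, ∀ᶠ j in atTop, M i j = 0) (f g : ι → LaurentSeries R)
    (i : ℤ) : blockCoeff M (f + g) i = blockCoeff M f i + blockCoeff M g i := by
  rw [blockCoeff, blockCoeff, blockCoeff, ← finsum_add_distrib
    (finite_support_mulVec_coeff hrow f i) (finite_support_mulVec_coeff hrow g i)]
  simp only [Pi.add_apply, HahnSeries.coeff_add, ← Matrix.mulVec_add]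
  rfl

theorem eventually_atBot_blockCoeff_eq_zero (hlow : ∀ N, ∀ᶠ i in atBot, ∀ j, N ≤ j → M i j = 0)
    (f : ι → LaurentSeries R) : ∀ᶠ i in atBot, blockCoeff M f i = 0 := by
  obtain ⟨N, hN⟩ := eventually_atBot.1 (eventually_atBot_forall_coeff_eq_zero f)
  exact (hlow N).mono fun i hi => blockCoeff_eq_zero (fun s j hj => hN j hj.le s) hi

theorem bddBelow_support_blockCoeff (hlow : ∀ N, ∀ᶠ i in atBot, ∀ j, N ≤ j → M i j = 0)
    (f : ι → LaurentSeries R) (r : ι) :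
    BddBelow (Function.support fun i => blockCoeff M f i r) := by
  obtain ⟨B, hB⟩ := eventually_atBot.1 (eventually_atBot_blockCoeff_eq_zero hlow f)
  refine ⟨B, fun i hi => ?_⟩
  by_contra hiB
  exact hi (by simp [hB i (not_le.1 hiB).le])

variable (M) in
noncomputable def ofBlockMatrix (hrow : ∀ i, ∀ᶠ j in atTop, M i j = 0)
    (hlow : ∀ N, ∀ᶠ i in atBot, ∀ j, N ≤ j → M i j = 0) :
    AddMonoid.End (ι → LaurentSeries R) where
  toFun f r := HahnSeries.ofSuppBddBelow _ (bddBelow_support_blockCoeff hlow f r)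
  map_zero' := by
    ext r i
    simp [blockCoeff_zero]
  map_add' f g := by
    ext r i
    simp [blockCoeff_add hrow]

theorem ofBlockMatrix_apply_coeff (hrow : ∀ i, ∀ᶠ j in atTop, M i j = 0)
    (hlow : ∀ N, ∀ᶠ i in atBot, ∀ j, N ≤ j → M i j = 0) (f : ι → LaurentSeries R) (r : ι)
    (i : ℤ) : (ofBlockMatrix M hrow hlow f r).coeff i = blockCoeff M f i r :=
  rfl

theorem blockCoeff_single (j : ℤ) (v : ι → R) (i : ℤ) :
    blockCoeff M (fun s => HahnSeries.single j (v s)) i = M i j *ᵥ v := by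
  rw [blockCoeff, finsum_eq_single _ j fun k hkj => by
    simp [HahnSeries.coeff_single_of_ne hkj, ← Pi.zero_def]]
  simp

end BlockAction

theorem continuous_ofBlockMatrix {K ι : Type*} [Field K] [Fintype ι] {M : ℤ → ℤ → Matrix ι ι K}
    (hrow : ∀ i, ∀ᶠ j in atTop, M i j = 0) (hlow : ∀ N, ∀ᶠ i in atBot, ∀ j, N ≤ j → M i j = 0)
    (hright : ∀ D, ∀ᶠ j in atTop, ∀ i, i < D → M i j = 0) :
    Continuous (ofBlockMatrix M hrow hlow) := by
  refine continuous_of_continuousAt_zero _ ?_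
  rw [ContinuousAt, map_zero, tendsto_pi_nhds]
  refine fun r => (hasBasis_nhds_zero K).tendsto_right_iff.2 fun D _ => ?_
  obtain ⟨N, hN⟩ := eventually_atTop.1 (hright D)
  have hsmall : ∀ᶠ f : ι → LaurentSeries K in 𝓝 0, ∀ s, ∀ j, j < N → (f s).coeff j = 0 :=
    eventually_all.2 fun s =>
      ((continuous_apply (A := fun _ : ι => LaurentSeries K) s).tendsto 0).eventually_mem
        ((hasBasis_nhds_zero K).mem_of_mem (i := N) trivial)
  filter_upwards [hsmall] with f hf i hiD
  exact congrFun (blockCoeff_eq_zero hf fun j hNj => hN j hNj i hiD) r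

end LaurentSeries

theorem blockMat_surjective_general (p : ℕ) [Fact p.Prime] (d : ℕ)
    (M : ℤ → ℤ → Matrix (Fin d) (Fin d) (ZMod p)) (hM : IsMmat p d M) :
    ∃ A : AddMonoid.End (Fin d → LaurentSeries (ZMod p)),
      Continuous A ∧ blockMat p d A = M := by
  obtain ⟨hrow, hcol, hcorner⟩ := hM
  have hrow' : ∀ i, ∀ᶠ j in atTop, M i j = 0 := fun i =>
    let ⟨J, hJ⟩ := hrow i; (eventually_gt_atTop J).mono hJ
  have hcol' : ∀ j, ∀ᶠ i in atBot, M i j = 0 := fun j =>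
    let ⟨I, hI⟩ := hcol j; (eventually_lt_atBot I).mono hI
  have hlow := eventually_atBot_forall_ge_eq_zero hcol' hcorner
  refine ⟨LaurentSeries.ofBlockMatrix M hrow' hlow, LaurentSeries.continuous_ofBlockMatrix hrow'
    hlow (eventually_atTop_forall_lt_eq_zero hrow' hcorner), ?_⟩
  ext i j r s
  simp [blockMat, LaurentSeries.ofBlockMatrix_apply_coeff, ← Pi.single_apply,
    LaurentSeries.blockCoeff_single]

/-- The block-matrix representation of continuous additive endomorphisms of `F_p((t))^d`
is surjective onto the ring `M_{d,ℤ}(F_p)` of matrices satisfying (M1)–(M3); together with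
injectivity this makes it a ring isomorphism. -/
theorem blockMat_surjective (p : ℕ) [Fact p.Prime] (d : ℕ) (hd : 0 < d)
    (M : ℤ → ℤ → Matrix (Fin d) (Fin d) (ZMod p)) (hM : IsMmat p d M) :
    ∃ A : AddMonoid.End (Fin d → LaurentSeries (ZMod p)),
      Continuous A ∧ blockMat p d A = M :=
  blockMat_surjective_general p d M hM
end

section
/- Let τ = [t·]^{⊕d} be the automorphism of F_p((t))^d given by coordinatewise multiplication by t. If V is a compact open subgroup of F_p((t))^d that is τ-invariant (τ(V) ⊆ V), then the index [V : τ(V)] equals p^d. -/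
/-!
The subgroups `Bₖ = tᵏ K⟦t⟧^ι` of tuples whose coefficients vanish below `k` are open, form a
basis of neighbourhoods of `0`, satisfy `τ(Bₖ) = Bₖ₊₁` and `[Bₖ : Bₖ₊₁] = |K|^|ι|`. An open `V`
contains some `Bₖ`, and if `V` is compact then `[V : Bₖ]` is finite. Computing `[V : τ(Bₖ)]` along
the chains `τ(Bₖ) ≤ τ(V) ≤ V` and `τ(Bₖ) ≤ Bₖ ≤ V`, where `[τ(V) : τ(Bₖ)] = [V : Bₖ]` because `τ`
is injective, gives `[V : τ(V)] · [V : Bₖ] = [V : Bₖ] · [Bₖ : Bₖ₊₁]`, and `[V : Bₖ]` cancels.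
-/

open scoped Topology
open WithZero

/-- The automorphism `τ = [t·]^{⊕d}` of `F_p((t))^d`: coordinatewise multiplication
by `t`, as an additive homomorphism. -/
noncomputable def tauHom (p d : ℕ) [Fact p.Prime] :
    (Fin d → LaurentSeries (ZMod p)) →+ (Fin d → LaurentSeries (ZMod p)) where
  toFun z := fun r => HahnSeries.single (1 : ℤ) (1 : ZMod p) * z r
  map_zero' := by funext r; simp
  map_add' x y := by funext r; simp [mul_add]

@[to_additive]
theorem Subgroup.relIndex_map_self_eq_of_le {G : Type*} [Group G] {f : G →* G}
    (hf : Function.Injective f) {B V : Subgroup G} (hBV : B ≤ V) (hfB : B.map f ≤ B)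
    (hfV : V.map f ≤ V) (hB : B.relIndex V ≠ 0) :
    (V.map f).relIndex V = (B.map f).relIndex B := by
  have hV := relIndex_mul_relIndex (B.map f) (V.map f) V (map_mono hBV) hfV
  rw [relIndex_map_map_of_injective _ _ hf] at hV
  have hB' := relIndex_mul_relIndex (B.map f) B V hfB hBV
  refine Nat.eq_of_mul_eq_mul_left (Nat.pos_of_ne_zero hB) ?_
  rw [hV, ← hB', mul_comm]

@[to_additive]
theorem Subgroup.relIndex_ne_zero_of_isOpen_of_isCompact {G : Type*} [Group G] [TopologicalSpace G]
    [IsTopologicalGroup G] {B V : Subgroup G} (hB : IsOpen (B : Set G))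
    (hV : IsCompact (V : Set G)) : B.relIndex V ≠ 0 := by
  have : CompactSpace V := isCompact_iff_compactSpace.mp hV
  have : Finite (V ⧸ B.subgroupOf V) :=
    quotient_finite_of_isOpen _ (hB.preimage continuous_subtype_val)
  exact index_ne_zero_of_finite

namespace LaurentSeries

variable {K : Type*} [Field K]

variable (K) in
def coeffVanishingBelow (k : ℤ) : AddSubgroup K⸨X⸩ where
  carrier := {f | ∀ n < k, f.coeff n = 0}
  zero_mem' := by simp
  add_mem' hf hg n hn := by simp [hf n hn, hg n hn]
  neg_mem' hf n hn := by simp [hf n hn]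

theorem mem_coeffVanishingBelow {k : ℤ} {f : K⸨X⸩} :
    f ∈ coeffVanishingBelow K k ↔ ∀ n < k, f.coeff n = 0 := Iff.rfl

theorem coeffVanishingBelow_antitone : Antitone (coeffVanishingBelow K) :=
  fun _ _ hkl _ hf n hn => hf n (hn.trans_le hkl)

theorem coe_coeffVanishingBelow (k : ℤ) :
    (coeffVanishingBelow K k : Set K⸨X⸩) = {f | Valued.v f ≤ exp (-k)} := by
  ext f
  exact (valuation_le_iff_coeff_lt_eq_zero K).symm

theorem isOpen_coeffVanishingBelow (k : ℤ) : IsOpen (coeffVanishingBelow K k : Set K⸨X⸩) := by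
  obtain ⟨f₀, hf₀⟩ := valuation_surjective K (exp (-k))
  have hr : Valued.v.restrict f₀ ≠ 0 := by
    simp only [ne_eq, Valuation.zero_iff]
    rintro rfl
    exact exp_ne_zero (hf₀.symm.trans (map_zero _))
  have := Valued.isOpen_closedBall K⸨X⸩ hr
  simpa only [Valuation.restrict_le_iff, hf₀, ← coe_coeffVanishingBelow] using this

theorem exists_coeffVanishingBelow_subset_of_mem_nhds_zero {s : Set K⸨X⸩} (hs : s ∈ 𝓝 0) :
    ∃ k : ℤ, (coeffVanishingBelow K k : Set K⸨X⸩) ⊆ s := by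
  obtain ⟨γ, hγ⟩ := Valued.mem_nhds_zero.mp hs
  set r := MonoidWithZeroHom.ValueGroup₀.embedding γ.1
  have hr : r ≠ 0 := by simp [r]
  refine ⟨1 - log r, fun f hf => hγ ?_⟩
  rw [Set.mem_ofPred_eq, Valuation.restrict_lt_iff_lt_embedding]
  calc Valued.v f ≤ exp (-(1 - log r)) := (valuation_le_iff_coeff_lt_eq_zero K).mpr hf
    _ < exp (log r) := exp_lt_exp.mpr (by omega)
    _ = r := exp_log hr

variable (ι : Type*)

variable (K) in
def piCoeffVanishingBelow (k : ℤ) : AddSubgroup (ι → K⸨X⸩) :=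
  AddSubgroup.pi Set.univ fun _ => coeffVanishingBelow K k

theorem mem_piCoeffVanishingBelow {k : ℤ} {f : ι → K⸨X⸩} :
    f ∈ piCoeffVanishingBelow K ι k ↔ ∀ i, ∀ n < k, (f i).coeff n = 0 := by
  simp [piCoeffVanishingBelow, AddSubgroup.mem_pi, mem_coeffVanishingBelow]

theorem piCoeffVanishingBelow_antitone : Antitone (piCoeffVanishingBelow K ι) :=
  fun _ _ hkl _ hf i _ => coeffVanishingBelow_antitone hkl (hf i trivial)

variable (K) in
noncomputable def mulTPow (m : ℤ) : (ι → K⸨X⸩) →+ (ι → K⸨X⸩) :=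
  AddMonoidHom.compLeft (AddMonoidHom.mulLeft (HahnSeries.single m 1)) ι

theorem mulTPow_apply (m : ℤ) (f : ι → K⸨X⸩) (i : ι) :
    mulTPow K ι m f i = HahnSeries.single m 1 * f i := rfl

theorem mulTPow_injective (m : ℤ) : Function.Injective (mulTPow K ι m) :=
  fun _ _ h => funext fun i =>
    mul_left_cancel₀ (HahnSeries.single_ne_zero one_ne_zero) (congrFun h i)

theorem map_mulTPow_piCoeffVanishingBelow (m k : ℤ) :
    (piCoeffVanishingBelow K ι k).map (mulTPow K ι m) = piCoeffVanishingBelow K ι (k + m) := by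
  ext f
  simp only [AddSubgroup.mem_map, mem_piCoeffVanishingBelow]
  constructor
  · rintro ⟨g, hg, rfl⟩ i n hn
    rw [mulTPow_apply, HahnSeries.coeff_single_mul, hg i _ (by omega), mul_zero]
  · refine fun hf => ⟨mulTPow K ι (-m) f, fun i n hn => ?_, funext fun i => ?_⟩
    · rw [mulTPow_apply, HahnSeries.coeff_single_mul, hf i _ (by omega), mul_zero]
    · rw [mulTPow_apply, mulTPow_apply, ← mul_assoc, HahnSeries.single_mul_single, add_neg_cancel,
        mul_one, HahnSeries.single_zero_one, one_mul]

variable [Finite ι]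

theorem isOpen_piCoeffVanishingBelow (k : ℤ) :
    IsOpen (piCoeffVanishingBelow K ι k : Set (ι → K⸨X⸩)) := by
  rw [piCoeffVanishingBelow, AddSubgroup.coe_pi]
  exact isOpen_set_pi Set.finite_univ fun _ _ => isOpen_coeffVanishingBelow k

theorem exists_piCoeffVanishingBelow_le_of_isOpen {V : AddSubgroup (ι → K⸨X⸩)}
    (hV : IsOpen (V : Set (ι → K⸨X⸩))) : ∃ k, piCoeffVanishingBelow K ι k ≤ V := by
  have hV0 : (V : Set (ι → K⸨X⸩)) ∈ 𝓝 0 := hV.mem_nhds V.zero_mem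
  rw [nhds_pi, Filter.mem_pi] at hV0
  obtain ⟨I, -, t, ht, htV⟩ := hV0
  choose k hk using fun i => exists_coeffVanishingBelow_subset_of_mem_nhds_zero (ht i)
  obtain ⟨m, hm⟩ := Finite.exists_le k
  exact ⟨m, fun f hf => htV fun i _ => hk i (coeffVanishingBelow_antitone (hm i) (hf i trivial))⟩

theorem relIndex_piCoeffVanishingBelow_succ (k : ℤ) :
    (piCoeffVanishingBelow K ι (k + 1)).relIndex (piCoeffVanishingBelow K ι k) =
      Nat.card K ^ Nat.card ι := by
  let kthCoeff : piCoeffVanishingBelow K ι k →+ (ι → K) :=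
    { toFun f i := (f.1 i).coeff k
      map_zero' := rfl
      map_add' _ _ := rfl }
  have hker : (piCoeffVanishingBelow K ι (k + 1)).addSubgroupOf (piCoeffVanishingBelow K ι k) =
      kthCoeff.ker := by
    ext ⟨f, hf⟩
    rw [mem_piCoeffVanishingBelow] at hf
    simp only [AddSubgroup.mem_addSubgroupOf, mem_piCoeffVanishingBelow, AddMonoidHom.mem_ker,
      funext_iff]
    refine ⟨fun h i => h i k (lt_add_one k), fun h i n hn => ?_⟩
    rcases (Int.lt_add_one_iff.mp hn).lt_or_eq with hn | rfl
    exacts [hf i n hn, h i]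
  have hsurj : Function.Surjective kthCoeff := fun c =>
    ⟨⟨fun i => HahnSeries.single k (c i), (mem_piCoeffVanishingBelow ι).mpr
      fun i n hn => HahnSeries.coeff_single_of_ne hn.ne⟩,
      funext fun i => HahnSeries.coeff_single_same k (c i)⟩
  rw [AddSubgroup.relIndex, hker, AddSubgroup.index_ker, AddMonoidHom.range_eq_top.mpr hsurj,
    AddSubgroup.card_top, Nat.card_fun]

end LaurentSeries

open LaurentSeries

theorem tauHom_eq_mulTPow (p d : ℕ) [Fact p.Prime] : tauHom p d = mulTPow (ZMod p) (Fin d) 1 :=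
  rfl

theorem index_tau_eq_general (p : ℕ) [Fact p.Prime] (d : ℕ)
    (V : AddSubgroup (Fin d → LaurentSeries (ZMod p)))
    (hVc : IsCompact (V : Set (Fin d → LaurentSeries (ZMod p))))
    (hVo : IsOpen (V : Set (Fin d → LaurentSeries (ZMod p))))
    (hτV : V.map (tauHom p d) ≤ V) :
    (V.map (tauHom p d)).relIndex V = p ^ d := by
  rw [tauHom_eq_mulTPow] at hτV ⊢
  obtain ⟨k, hkV⟩ := exists_piCoeffVanishingBelow_le_of_isOpen (Fin d) hVo
  have hk : (piCoeffVanishingBelow (ZMod p) (Fin d) k).map (mulTPow (ZMod p) (Fin d) 1) =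
      piCoeffVanishingBelow (ZMod p) (Fin d) (k + 1) :=
    map_mulTPow_piCoeffVanishingBelow (Fin d) 1 k
  rw [AddSubgroup.relIndex_map_self_eq_of_le (mulTPow_injective _ 1) hkV
      (hk.trans_le (piCoeffVanishingBelow_antitone _ (Int.le_add_one le_rfl))) hτV
      (AddSubgroup.relIndex_ne_zero_of_isOpen_of_isCompact (isOpen_piCoeffVanishingBelow _ k) hVc),
    hk, relIndex_piCoeffVanishingBelow_succ, Nat.card_zmod, Nat.card_fin]

/-- If `V` is a `τ`-invariant compact open subgroup of `F_p((t))^d`, then the index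
`[V : τ(V)]` equals `p^d`. -/
theorem index_tau_eq (p : ℕ) [Fact p.Prime] (d : ℕ) (hd : 0 < d)
    (V : AddSubgroup (Fin d → LaurentSeries (ZMod p)))
    (hVc : IsCompact (V : Set (Fin d → LaurentSeries (ZMod p))))
    (hVo : IsOpen (V : Set (Fin d → LaurentSeries (ZMod p))))
    (hτV : V.map (tauHom p d) ≤ V) :
    (V.map (tauHom p d)).relIndex V = p ^ d :=
  index_tau_eq_general p d V hVc hVo hτV
end
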